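/- Let p₁, p₂, p₃ be distinct primes, each congruent to 7 modulo 8, with (−p₁/p₂) = (−p₂/p₃) = −1 and (−p₁/p₃) = 1. Let (a, b) be the fundamental solution of the Pell equation x² − p₁p₂p₃·y² = 1. Then there exist integers b₁, b₂ with b = b₁·b₂, a + 1 = b₁², and a − 1 = p₁p₂p₃·b₂²; consequently b₁² − p₁p₂p₃·b₂² = 2 and 2·(a + b·√(p₁p₂p₃)) = (b₁ + b₂·√(p₁p₂p₃))². -/

import Mathlib

/-!
Write `D = p₁ p₂ p₃`. If `a` is even, `a + 1` and `a - 1` are coprime with product `D b²`, so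
`a + 1 = r s²` and `a - 1 = t u²` with `r t = D`; if `a` is odd, the same holds for `(a + 1) / 2`
and `(a - 1) / 2`. Either way `r s² - t u² ∈ {1, 2}`, and reducing modulo a prime `q ∣ D` shows that
`r` is a square mod `q` if `q ∤ r`, and `-t` is one if `q ∣ r` (as `q ≡ 7 mod 8`, `2` is a square
and `-1` is not). With quadratic reciprocity, the prescribed symbols rule out every `r ≠ 1`.
For odd `a`, `r = 1` yields a solution `s² - D u² = 1` with `|s| < 2 s² - 1 = a`, contradicting
minimality; so `a` is even, and `b₁ = s`, `b₂ = u`.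
-/

/-- `(a, b)` is the fundamental solution of the Pell equation `x² − D·y² = 1`:
the solution in positive integers with minimal `a`. -/
def IsFundamentalPellSolution (D a b : ℤ) : Prop :=
  0 < a ∧ 0 < b ∧ a ^ 2 - D * b ^ 2 = 1 ∧
    ∀ a' b' : ℤ, 0 < a' → 0 < b' → a' ^ 2 - D * b' ^ 2 = 1 → a ≤ a'

theorem Int.exists_eq_sq_of_isCoprime_of_pos {x y m : ℤ} (hx : 0 < x) (hxy : IsCoprime x y)
    (h : x * y = m ^ 2) : ∃ s, x = s ^ 2 := by
  obtain ⟨s, hs | hs⟩ := Int.sq_of_isCoprime hxy h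
  · exact ⟨s, hs⟩
  · nlinarith [sq_nonneg s]

/-- Taking `r = gcd(x, D)` and `t = gcd(y, D)`, coprimality of `x` and `y` gives `r * t = D`. -/
theorem Int.exists_mul_sq_of_isCoprime_of_mul_eq {D : ℕ} {x y m : ℤ} (hx : 0 < x) (hy : 0 < y)
    (hxy : IsCoprime x y) (h : x * y = D * m ^ 2) :
    ∃ r t : ℕ, r * t = D ∧ ∃ s u : ℤ, x = r * s ^ 2 ∧ y = t * u ^ 2 ∧ m = s * u := by
  have hrt : x.gcd D * y.gcd D = D := by
    have hcop : Nat.Coprime x.natAbs y.natAbs := Int.isCoprime_iff_gcd_eq_one.mp hxy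
    have habs : x.natAbs * y.natAbs = D * m.natAbs ^ 2 := by
      simpa [Int.natAbs_mul, Int.natAbs_pow] using congrArg Int.natAbs h
    rw [Int.gcd_eq_natAbs, Int.gcd_eq_natAbs, Int.natAbs_natCast, Nat.gcd_comm,
      Nat.gcd_comm y.natAbs, ← hcop.gcd_mul, habs, Nat.gcd_mul_right_right]
  obtain ⟨X, hX⟩ := Int.gcd_dvd_left x D
  obtain ⟨Y, hY⟩ := Int.gcd_dvd_left y D
  generalize x.gcd D = r at hX hrt
  generalize y.gcd D = t at hY hrt
  have hD : (D : ℤ) ≠ 0 := by rintro hD; nlinarith [mul_pos hx hy]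
  have hXY : X * Y = m ^ 2 := by
    refine mul_left_cancel₀ hD ?_
    have hrt' : (r : ℤ) * t = D := by exact_mod_cast hrt
    linear_combination h - y * hX - r * X * hY - X * Y * hrt'
  have hcop : IsCoprime X Y := ((hX ▸ hY ▸ hxy).of_mul_left_right).of_mul_right_right
  obtain ⟨s, rfl⟩ := Int.exists_eq_sq_of_isCoprime_of_pos
    (pos_of_mul_pos_right (hX ▸ hx) (by positivity)) hcop hXY
  obtain ⟨u, rfl⟩ := Int.exists_eq_sq_of_isCoprime_of_pos
    (pos_of_mul_pos_right (hY ▸ hy) (by positivity)) hcop.symm (by rw [mul_comm, hXY])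
  rcases sq_eq_sq_iff_eq_or_eq_neg.mp (hXY.symm.trans (mul_pow s u 2).symm) with hm | hm
  · exact ⟨_, _, hrt, s, u, hX, hY, hm⟩
  · exact ⟨_, _, hrt, s, -u, hX, by rw [hY, neg_sq], by rw [hm, mul_neg]⟩

theorem exists_mul_sq_of_pell_of_even {D : ℕ} {a b : ℤ} (h : a ^ 2 - D * b ^ 2 = 1) (ha : 0 < a)
    (heven : Even a) :
    ∃ r t : ℕ, r * t = D ∧ ∃ s u : ℤ, a + 1 = r * s ^ 2 ∧ a - 1 = t * u ^ 2 ∧ b = s * u := by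
  obtain ⟨k, rfl⟩ := heven
  exact Int.exists_mul_sq_of_isCoprime_of_mul_eq (by omega) (by omega) ⟨1 - k, k, by ring⟩
    (by linear_combination h)

theorem exists_mul_sq_of_pell_of_odd {D : ℕ} {a b : ℤ} (hD : Odd D) (h : a ^ 2 - D * b ^ 2 = 1)
    (ha : 1 < a) (hodd : Odd a) :
    ∃ r t : ℕ, r * t = D ∧ ∃ s u : ℤ,
      a + 1 = 2 * (r * s ^ 2) ∧ a - 1 = 2 * (t * u ^ 2) ∧ b = 2 * (s * u) := by
  obtain ⟨k, rfl⟩ := hodd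
  obtain ⟨β, rfl⟩ : Even b := by
    have hDb : Even ((D : ℤ) * b ^ 2) := ⟨2 * k ^ 2 + 2 * k, by linear_combination -h⟩
    have hDodd : ¬Even (D : ℤ) := Int.not_even_iff_odd.mpr (hD.natCast)
    exact (Int.even_pow.mp (Int.even_mul.mp hDb |>.resolve_left hDodd)).1
  have hk : (k + 1) * k = D * β ^ 2 :=
    mul_left_cancel₀ (four_ne_zero (α := ℤ)) (by linear_combination h)
  obtain ⟨r, t, hrt, s, u, hs, hu, hβ⟩ :=
    Int.exists_mul_sq_of_isCoprime_of_mul_eq (by omega) (by omega) ⟨1, -1, by ring⟩ hk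
  exact ⟨r, t, hrt, s, u, by rw [← hs]; ring, by rw [← hu]; ring, by rw [hβ]; ring⟩

/-- A solution `(s, u)` with `a = 2 s² - 1` would satisfy `|s| < a`. -/
theorem IsFundamentalPellSolution.ne_two_mul_sq_sub_one {D a b s u : ℤ}
    (hab : IsFundamentalPellSolution D a b) (hD : 0 < D) (hs : s ^ 2 - D * u ^ 2 = 1)
    (hu : u ≠ 0) : a ≠ 2 * s ^ 2 - 1 := by
  rintro rfl
  have hs0 : s ≠ 0 := by rintro rfl; nlinarith [hab.1]
  have hmin := hab.2.2.2 |s| |u| (abs_pos.mpr hs0) (abs_pos.mpr hu) (by rwa [sq_abs, sq_abs])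
  have hs2 : 2 ≤ |s| := by nlinarith [sq_abs s, sq_abs u, abs_pos.mpr hu, abs_nonneg s]
  nlinarith [sq_abs s]

theorem two_mul_add_mul_sqrt_eq_sq {D a b b₁ b₂ : ℝ} (hD : 0 ≤ D) (h₁ : a + 1 = b₁ ^ 2)
    (h₂ : a - 1 = D * b₂ ^ 2) (hb : b = b₁ * b₂) :
    2 * (a + b * Real.sqrt D) = (b₁ + b₂ * Real.sqrt D) ^ 2 := by
  linear_combination h₁ + h₂ + 2 * Real.sqrt D * hb - b₂ ^ 2 * Real.sq_sqrt hD

theorem Nat.exists_eq_mul_mul_of_dvd_mul_mul {p₁ p₂ p₃ r : ℕ} (hp₁ : p₁.Prime) (hp₂ : p₂.Prime)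
    (hp₃ : p₃.Prime) (h : r ∣ p₁ * p₂ * p₃) :
    ∃ r₁ r₂ r₃ : ℕ, (r₁ = 1 ∨ r₁ = p₁) ∧ (r₂ = 1 ∨ r₂ = p₂) ∧ (r₃ = 1 ∨ r₃ = p₃) ∧
      r = r₁ * r₂ * r₃ := by
  obtain ⟨r₁₂, r₃, h₁₂, h₃, rfl⟩ := Nat.dvd_mul.mp h
  obtain ⟨r₁, r₂, h₁, h₂, rfl⟩ := Nat.dvd_mul.mp h₁₂
  exact ⟨r₁, r₂, r₃, (Nat.dvd_prime hp₁).mp h₁, (Nat.dvd_prime hp₂).mp h₂,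
    (Nat.dvd_prime hp₃).mp h₃, rfl⟩

section Legendre

variable {q : ℕ} [Fact q.Prime]

theorem legendreSym_neg_one_of_mod_four_eq_three (hq : q % 4 = 3) : legendreSym q (-1) = -1 := by
  rw [legendreSym.at_neg_one (by omega), ZMod.χ₄_nat_three_mod_four hq]

theorem legendreSym_neg_of_mod_four_eq_three (hq : q % 4 = 3) (a : ℤ) :
    legendreSym q (-a) = -legendreSym q a := by
  rw [neg_eq_neg_one_mul, legendreSym.mul, legendreSym_neg_one_of_mod_four_eq_three hq, neg_one_mul]

theorem legendreSym_two_of_mod_eight_eq_seven (hq : q % 8 = 7) : legendreSym q 2 = 1 := by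
  rw [legendreSym.at_two (by omega), ZMod.χ₈_nat_mod_eight, hq]
  decide

theorem legendreSym_ne_neg_one_of_mul_sq_sub_mul_sq_eq {r t s u c : ℤ} (hrt : (q : ℤ) ∣ r * t)
    (h : r * s ^ 2 - t * u ^ 2 = c) (hc : legendreSym q c = 1) : legendreSym q r ≠ -1 := by
  intro hr
  have hqr : ¬(q : ℤ) ∣ r := fun hqr => by
    rw [(legendreSym.eq_zero_iff q r).mpr ((ZMod.intCast_zmod_eq_zero_iff_dvd r q).mpr hqr)] at hr
    norm_num at hr
  have hqt : (q : ℤ) ∣ t := (Int.Prime.dvd_mul' Fact.out hrt).resolve_left hqr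
  have hmod : c ≡ r * s ^ 2 [ZMOD q] :=
    Int.modEq_iff_dvd.mpr (by rw [← h, sub_sub_cancel]; exact hqt.mul_right _)
  have hsq : legendreSym q (r * s ^ 2) = legendreSym q c := by
    rw [legendreSym.mod, ← hmod, ← legendreSym.mod]
  rw [sq s, legendreSym.mul, legendreSym.mul, hr, hc] at hsq
  nlinarith [sq_nonneg (legendreSym q s)]

end Legendre

theorem eq_one_of_mul_sq_sub_mul_sq_eq {p₁ p₂ p₃ : ℕ} [Fact p₁.Prime] [Fact p₂.Prime]
    [Fact p₃.Prime] (hc₁ : p₁ % 8 = 7) (hc₂ : p₂ % 8 = 7) (hc₃ : p₃ % 8 = 7)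
    (h₁ : legendreSym p₂ (-(p₁ : ℤ)) = -1) (h₂ : legendreSym p₃ (-(p₂ : ℤ)) = -1)
    (h₃ : legendreSym p₃ (-(p₁ : ℤ)) = 1) {r t : ℕ} (hrt : r * t = p₁ * p₂ * p₃) {s u c : ℤ}
    (h : r * s ^ 2 - t * u ^ 2 = c) (hc : c = 1 ∨ c = 2) : r = 1 := by
  have hcq : ∀ (q : ℕ) [Fact q.Prime], q % 8 = 7 → legendreSym q c = 1 := by
    intro q _ hq
    rcases hc with rfl | rfl
    exacts [legendreSym.at_one q, legendreSym_two_of_mod_eight_eq_seven hq]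
  have hdvd : ∀ q, q ∣ p₁ * p₂ * p₃ → (q : ℤ) ∣ (r : ℤ) * t := fun q hq => by
    exact_mod_cast hrt ▸ hq
  have key : ∀ (q : ℕ) [Fact q.Prime], q % 8 = 7 → q ∣ p₁ * p₂ * p₃ → legendreSym q r ≠ -1 :=
    fun q _ hq hqD => legendreSym_ne_neg_one_of_mul_sq_sub_mul_sq_eq (hdvd q hqD) h (hcq q hq)
  have d₁ : p₁ ∣ p₁ * p₂ * p₃ := (dvd_mul_right p₁ p₂).mul_right p₃
  have d₂ : p₂ ∣ p₁ * p₂ * p₃ := (dvd_mul_left p₂ p₁).mul_right p₃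
  have d₃ : p₃ ∣ p₁ * p₂ * p₃ := dvd_mul_left p₃ _
  have neg := fun {q : ℕ} [Fact q.Prime] (hq : q % 8 = 7) =>
    legendreSym_neg_of_mod_four_eq_three (q := q) (by omega)
  have recip := fun {p q : ℕ} [Fact p.Prime] [Fact q.Prime] (hp : p % 8 = 7) (hq : q % 8 = 7) =>
    legendreSym.quadratic_reciprocity_three_mod_four (p := p) (q := q) (by omega) (by omega)
  -- `lᵢⱼ` is the symbol `(pᵢ / pⱼ)`
  have l₁₂ : legendreSym p₂ p₁ = 1 := by linarith [neg hc₂ p₁]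
  have l₂₃ : legendreSym p₃ p₂ = 1 := by linarith [neg hc₃ p₂]
  have l₁₃ : legendreSym p₃ p₁ = -1 := by linarith [neg hc₃ p₁]
  have l₂₁ : legendreSym p₁ p₂ = -1 := by linarith [recip hc₁ hc₂]
  have l₃₂ : legendreSym p₂ p₃ = -1 := by linarith [recip hc₂ hc₃]
  have l₃₁ : legendreSym p₁ p₃ = 1 := by linarith [recip hc₁ hc₃]
  obtain ⟨r₁, r₂, r₃, e₁, e₂, e₃, rfl⟩ :=
    Nat.exists_eq_mul_mul_of_dvd_mul_mul Fact.out Fact.out Fact.out (hrt ▸ dvd_mul_right r t)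
  rcases e₁ with e₁ | e₁ <;> rcases e₂ with e₂ | e₂ <;> rcases e₃ with e₃ | e₃ <;> subst r₁ r₂ r₃
  · rfl
  · exact (key p₂ hc₂ d₂ (by simpa using l₃₂)).elim
  · exact (key p₁ hc₁ d₁ (by simpa using l₂₁)).elim
  · exact (key p₁ hc₁ d₁ (by simp [legendreSym.mul, l₂₁, l₃₁])).elim
  · exact (key p₃ hc₃ d₃ (by simpa using l₁₃)).elim
  · exact (key p₂ hc₂ d₂ (by simp [legendreSym.mul, l₁₂, l₃₂])).elim
  · exact (key p₃ hc₃ d₃ (by simp [legendreSym.mul, l₁₃, l₂₃])).elim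
  · obtain rfl : t = 1 := (Nat.mul_eq_left (by simp [Nat.Prime.ne_zero, Fact.out])).mp hrt
    refine (legendreSym_ne_neg_one_of_mul_sq_sub_mul_sq_eq (r := -1) (t := -(p₁ * p₂ * p₃ : ℕ))
      (s := u) (u := s) ?_ (by linear_combination h) (hcq p₁ hc₁)
      (legendreSym_neg_one_of_mod_four_eq_three (by omega))).elim
    simpa using hdvd p₁ d₁

theorem stmt_8_general (p₁ p₂ p₃ : ℕ)
    [hp₁ : Fact p₁.Prime] [hp₂ : Fact p₂.Prime] [hp₃ : Fact p₃.Prime]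
    (hc₁ : p₁ % 8 = 7) (hc₂ : p₂ % 8 = 7) (hc₃ : p₃ % 8 = 7)
    (h₁ : legendreSym p₂ (-(p₁ : ℤ)) = -1)
    (h₂ : legendreSym p₃ (-(p₂ : ℤ)) = -1)
    (h₃ : legendreSym p₃ (-(p₁ : ℤ)) = 1)
    (a b : ℤ)
    (hab : IsFundamentalPellSolution (p₁ * p₂ * p₃) a b) :
    ∃ b₁ b₂ : ℤ, b = b₁ * b₂ ∧ a + 1 = b₁ ^ 2 ∧
      a - 1 = p₁ * p₂ * p₃ * b₂ ^ 2 ∧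
      b₁ ^ 2 - p₁ * p₂ * p₃ * b₂ ^ 2 = 2 ∧
      2 * ((a : ℝ) + (b : ℝ) * Real.sqrt (p₁ * p₂ * p₃)) =
        ((b₁ : ℝ) + (b₂ : ℝ) * Real.sqrt (p₁ * p₂ * p₃)) ^ 2 := by
  have ⟨ha₀, hb₀, hpell₀, _⟩ := hab
  have hD : (0 : ℤ) < p₁ * p₂ * p₃ := by
    have := hp₁.out.pos; have := hp₂.out.pos; have := hp₃.out.pos; positivity
  have hpell : a ^ 2 - ((p₁ * p₂ * p₃ : ℕ) : ℤ) * b ^ 2 = 1 := by push_cast; exact hpell₀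
  have ha : 1 < a := by nlinarith [mul_pos hD (pow_pos hb₀ 2)]
  have core := @eq_one_of_mul_sq_sub_mul_sq_eq p₁ p₂ p₃ _ _ _ hc₁ hc₂ hc₃ h₁ h₂ h₃
  rcases Int.even_or_odd a with heven | hodd
  · obtain ⟨r, t, hrt, s, u, hs, hu, hb⟩ := exists_mul_sq_of_pell_of_even hpell ha₀ heven
    obtain rfl := core hrt (s := s) (u := u) (c := 2) (by linear_combination hu - hs) (.inr rfl)
    obtain rfl : t = p₁ * p₂ * p₃ := by simpa using hrt
    push_cast at hs hu
    refine ⟨s, u, hb, by simpa using hs, hu, by linear_combination hu - hs, ?_⟩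
    exact two_mul_add_mul_sqrt_eq_sq (by positivity) (by exact_mod_cast hs.trans (one_mul _))
      (by exact_mod_cast hu) (by exact_mod_cast hb)
  · have hDodd : Odd (p₁ * p₂ * p₃) :=
      ((Nat.odd_iff.mpr (by omega)).mul (Nat.odd_iff.mpr (by omega))).mul (Nat.odd_iff.mpr (by omega))
    obtain ⟨r, t, hrt, s, u, hs, hu, -⟩ := exists_mul_sq_of_pell_of_odd hDodd hpell ha hodd
    obtain rfl := core hrt (s := s) (u := u) (c := 1) (by linarith) (.inl rfl)
    obtain rfl : t = p₁ * p₂ * p₃ := by simpa using hrt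
    push_cast at hs hu
    refine absurd (by linear_combination hs : a = 2 * s ^ 2 - 1)
      (hab.ne_two_mul_sq_sub_one hD (by linarith) ?_)
    rintro rfl
    linarith

/-- decomposition of the fundamental solution of
`x² − p₁p₂p₃·y² = 1` for distinct primes `p₁, p₂, p₃ ≡ 7 (mod 8)` with
`(−p₁/p₂) = (−p₂/p₃) = −1` and `(−p₁/p₃) = 1`. -/
theorem stmt_8 (p₁ p₂ p₃ : ℕ)
    [hp₁ : Fact p₁.Prime] [hp₂ : Fact p₂.Prime] [hp₃ : Fact p₃.Prime]
    (hd₁₂ : p₁ ≠ p₂) (hd₁₃ : p₁ ≠ p₃) (hd₂₃ : p₂ ≠ p₃)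
    (hc₁ : p₁ % 8 = 7) (hc₂ : p₂ % 8 = 7) (hc₃ : p₃ % 8 = 7)
    (h₁ : legendreSym p₂ (-(p₁ : ℤ)) = -1)
    (h₂ : legendreSym p₃ (-(p₂ : ℤ)) = -1)
    (h₃ : legendreSym p₃ (-(p₁ : ℤ)) = 1)
    (a b : ℤ)
    (hab : IsFundamentalPellSolution (p₁ * p₂ * p₃) a b) :
    ∃ b₁ b₂ : ℤ, b = b₁ * b₂ ∧ a + 1 = b₁ ^ 2 ∧
      a - 1 = p₁ * p₂ * p₃ * b₂ ^ 2 ∧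
      b₁ ^ 2 - p₁ * p₂ * p₃ * b₂ ^ 2 = 2 ∧
      2 * ((a : ℝ) + (b : ℝ) * Real.sqrt (p₁ * p₂ * p₃)) =
        ((b₁ : ℝ) + (b₂ : ℝ) * Real.sqrt (p₁ * p₂ * p₃)) ^ 2 :=
  stmt_8_general p₁ p₂ p₃ (hp₁ := hp₁) (hp₂ := hp₂) (hp₃ := hp₃) hc₁ hc₂ hc₃ h₁ h₂ h₃ a b hab
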